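/- Let (x^k, u^k) be NCS iterates and let x⋆ be a primal solution with dual certificate u⋆. Then for every k ≥ 0, D²(x^{k+1} − x^k, u^{k+1} − u^k) ≤ (1/(k+1)) · D²(x⁰ − x⋆, u⁰ − u⋆). -/

import Mathlib

open Matrix

-- Moore–Penrose pseudoinverse, characterized by the four Penrose conditions
-- (which determine it uniquely when a solution exists).
open Classical in
noncomputable def mpInv {k l : ℕ} (A : Matrix (Fin k) (Fin l) ℝ) : Matrix (Fin l) (Fin k) ℝ :=
  if h : ∃ X : Matrix (Fin l) (Fin k) ℝ,
      A * X * A = A ∧ X * A * X = X ∧ (A * X)ᵀ = A * X ∧ (X * A)ᵀ = X * A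
  then h.choose else 0

-- `ProxRel g α z u'` says that `u' = prox_{αg*}(z)`, i.e. that
-- `α⁻¹ (z - u')` is a minimizer of `x ↦ g(x) + (α/2)‖x - z/α‖²`
-- (by Moreau's identity `prox_{αg*}(z) = z - α argmin_x {g(x) + (α/2)‖x - z/α‖²}`).
def ProxRel {m : ℕ} (g : (Fin m → ℝ) → ℝ) (α : ℝ) (z u' : Fin m → ℝ) : Prop :=
  IsMinOn (fun y : Fin m → ℝ => g y + (α / 2) * ((y - α⁻¹ • z) ⬝ᵥ (y - α⁻¹ • z)))
    Set.univ (α⁻¹ • (z - u'))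

/-- The squared seminorm `D²(x, u) = ‖u − αAx‖² + ‖x‖²_{αM − α²AᵀA}`. -/
noncomputable def Dsq {m n : ℕ} (A : Matrix (Fin m) (Fin n) ℝ) (α : ℝ)
    (M : Matrix (Fin n) (Fin n) ℝ) (x : Fin n → ℝ) (u : Fin m → ℝ) : ℝ :=
  (u - α • (A *ᵥ x)) ⬝ᵥ (u - α • (A *ᵥ x)) +
    x ⬝ᵥ ((α • M - α ^ 2 • (Aᵀ * A)) *ᵥ x)

/-- The seminorm `D(x, u) = (‖u − αAx‖² + ‖x‖²_{αM − α²AᵀA})^{1/2}`. -/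
noncomputable def Dnorm {m n : ℕ} (A : Matrix (Fin m) (Fin n) ℝ) (α : ℝ)
    (M : Matrix (Fin n) (Fin n) ℝ) (x : Fin n → ℝ) (u : Fin m → ℝ) : ℝ :=
  Real.sqrt (Dsq A α M x u)

/-!
An NCS step `(x, u) ↦ (x⁺, u⁺)` satisfies `M (x - x⁺) = Aᵀ u` and, by the optimality condition of
the prox, `u⁺ ∈ ∂g` at the prox point; the pair `(x⋆, u⋆)` satisfies the same two relations as a
fixed point. For the difference `Δ ↦ Δ⁺` of two such steps, monotonicity of `∂g` makes the cross
term in the expansion of `D²(Δ)` nonnegative, so `D²(Δ⁺) + D²(Δ - Δ⁺) ≤ D²(Δ)`. Against the fixed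
point this is Fejér monotonicity, `D²(zᵏ⁺¹ - z⋆) + D²(zᵏ⁺¹ - zᵏ) ≤ D²(zᵏ - z⋆)`; for two
consecutive steps it shows that `D²(zᵏ⁺¹ - zᵏ)` is nonincreasing. Telescoping the former and
using the latter gives `(k + 1) D²(zᵏ⁺¹ - zᵏ) ≤ D²(z⁰ - z⋆)`.
-/

open Set Filter Topology

/-- The pseudoinverse of a symmetric matrix is `t ↦ t⁻¹` applied to it by functional calculus,
the convention `0⁻¹ = 0` taking care of the kernel. -/
theorem exists_penrose_of_transpose_eq {l : ℕ} {M : Matrix (Fin l) (Fin l) ℝ} (hM : Mᵀ = M) :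
    ∃ X : Matrix (Fin l) (Fin l) ℝ,
      M * X * M = M ∧ X * M * X = X ∧ (M * X)ᵀ = M * X ∧ (X * M)ᵀ = X * M := by
  have hsa : IsSelfAdjoint M := hM
  have hmul (f g : ℝ → ℝ) : cfc f M * cfc g M = cfc (fun t => f t * g t) M :=
    (cfc_mul f g M (M.finite_spectrum.continuousOn f) (M.finite_spectrum.continuousOn g)).symm
  have hsymm (f : ℝ → ℝ) : (cfc f M)ᵀ = cfc f M := cfc_predicate f M
  have hid : cfc (fun t : ℝ => t) M = M := cfc_id' ℝ M
  have hMX : M * cfc (Inv.inv : ℝ → ℝ) M = cfc (fun t : ℝ => t * t⁻¹) M := by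
    rw [← hmul, hid]
  have hXM : cfc (Inv.inv : ℝ → ℝ) M * M = cfc (fun t : ℝ => t⁻¹ * t) M := by
    rw [← hmul, hid]
  refine ⟨cfc Inv.inv M, ?_, ?_, by rw [hMX, hsymm], by rw [hXM, hsymm]⟩
  · calc M * cfc Inv.inv M * M = cfc (fun t : ℝ => t * t⁻¹) M * cfc (fun t : ℝ => t) M := by
          rw [hMX, hid]
      _ = M := by rw [hmul]; simp only [mul_inv_mul_cancel, hid]
  · calc cfc Inv.inv M * M * cfc Inv.inv M = cfc (fun t : ℝ => t⁻¹ * t * t⁻¹) M := by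
          rw [hXM, hmul]
      _ = cfc Inv.inv M := by
          congr 1; funext t; simpa only [inv_inv] using mul_inv_mul_cancel t⁻¹

theorem mpInv_penrose_of_transpose_eq {l : ℕ} {M : Matrix (Fin l) (Fin l) ℝ} (hM : Mᵀ = M) :
    M * mpInv M * M = M ∧ mpInv M * M * mpInv M = mpInv M ∧
      (M * mpInv M)ᵀ = M * mpInv M ∧ (mpInv M * M)ᵀ = mpInv M * M := by
  have h := exists_penrose_of_transpose_eq hM
  rw [mpInv, dif_pos h]
  exact h.choose_spec

theorem mulVec_eq_zero_of_posSemidef_sub {m n : ℕ} {A : Matrix (Fin m) (Fin n) ℝ} {α : ℝ}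
    (hα : 0 < α) {M : Matrix (Fin n) (Fin n) ℝ} (hMpsd : (M - α • (Aᵀ * A)).PosSemidef)
    {w : Fin n → ℝ} (hw : M *ᵥ w = 0) : A *ᵥ w = 0 := by
  have h := hMpsd.dotProduct_mulVec_nonneg w
  rw [star_trivial, sub_mulVec, dotProduct_sub, hw, smul_mulVec, ← mulVec_mulVec,
    dotProduct_smul, dotProduct_mulVec, vecMul_transpose, smul_eq_mul] at h
  have hsq : (A *ᵥ w) ⬝ᵥ (A *ᵥ w) ≤ 0 := by
    simp only [dotProduct_zero, zero_sub, neg_nonneg] at h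
    exact nonpos_of_mul_nonpos_right h hα
  exact dotProduct_self_eq_zero.mp (le_antisymm hsq (dotProduct_self_star_nonneg _))

/-- `M M⁺` is the orthogonal projection onto `range M = (ker M)ᗮ ⊇ (ker A)ᗮ = range Aᵀ`. -/
theorem mulVec_mpInv_mulVec_transpose {m n : ℕ} (A : Matrix (Fin m) (Fin n) ℝ)
    {M : Matrix (Fin n) (Fin n) ℝ} (hM : Mᵀ = M) (hker : ∀ w, M *ᵥ w = 0 → A *ᵥ w = 0)
    (v : Fin m → ℝ) : M *ᵥ (mpInv M *ᵥ (Aᵀ *ᵥ v)) = Aᵀ *ᵥ v := by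
  obtain ⟨hMXM, -, hMXsymm, -⟩ := mpInv_penrose_of_transpose_eq hM
  set E : Matrix (Fin n) (Fin n) ℝ := 1 - M * mpInv M
  have hEsymm : Eᵀ = E := by rw [transpose_sub, transpose_one, hMXsymm]
  have hEM : E * M = 0 := by simp only [E, Matrix.sub_mul, Matrix.one_mul, hMXM, sub_self]
  have hME : M * E = 0 := by rw [← hM, ← hEsymm, ← transpose_mul, hEM, transpose_zero]
  have hAE : A * E = 0 := ext_iff_mulVec.mpr fun w => by
    rw [← mulVec_mulVec, zero_mulVec]
    exact hker _ (by rw [mulVec_mulVec, hME, zero_mulVec])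
  have hEA : E * Aᵀ = 0 := by rw [← hEsymm, ← transpose_mul, hAE, transpose_zero]
  have hMXA : M * mpInv M * Aᵀ = Aᵀ := by
    simp only [E, Matrix.sub_mul, Matrix.one_mul, sub_eq_zero] at hEA
    exact hEA.symm
  rw [mulVec_mulVec, mulVec_mulVec, hMXA]

section Subgradient

variable {ι : Type*} [Fintype ι]

def HasSubgradientAt (g : (ι → ℝ) → ℝ) (y s : ι → ℝ) : Prop :=
  ∀ z, g y + s ⬝ᵥ (z - y) ≤ g z

theorem HasSubgradientAt.dotProduct_sub_nonneg {g : (ι → ℝ) → ℝ} {y z s t : ι → ℝ}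
    (hs : HasSubgradientAt g y s) (ht : HasSubgradientAt g z t) : 0 ≤ (s - t) ⬝ᵥ (y - z) := by
  have h₁ := hs z
  have h₂ := ht y
  have h : (s - t) ⬝ᵥ (y - z) = -(s ⬝ᵥ (z - y)) - t ⬝ᵥ (y - z) := by
    rw [sub_dotProduct, ← neg_sub y z, dotProduct_neg, neg_neg]
  linarith

/-- Compare the minimizer with the points of the segment towards `y` and let them tend to it. -/
theorem hasSubgradientAt_of_isMinOn_add_sq {g : (ι → ℝ) → ℝ} (hg : ConvexOn ℝ univ g) {α : ℝ}
    {c y₀ : ι → ℝ} (hmin : IsMinOn (fun y => g y + (α / 2) * ((y - c) ⬝ᵥ (y - c))) univ y₀) :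
    HasSubgradientAt g y₀ (α • (c - y₀)) := by
  intro y
  have hslope : ∀ t ∈ Ioc (0 : ℝ) 1,
      (α • (c - y₀)) ⬝ᵥ (y - y₀) ≤ g y - g y₀ + α / 2 * ((y - y₀) ⬝ᵥ (y - y₀)) * t := by
    rintro t ⟨ht₀, ht₁⟩
    have hconv : g (y₀ + t • (y - y₀)) ≤ (1 - t) * g y₀ + t * g y := by
      have := hg.2 (mem_univ y₀) (mem_univ y) (sub_nonneg.2 ht₁) ht₀.le (sub_add_cancel 1 t)
      rwa [show (1 - t) • y₀ + t • y = y₀ + t • (y - y₀) by module, smul_eq_mul,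
        smul_eq_mul] at this
    have hle : g y₀ + α / 2 * ((y₀ - c) ⬝ᵥ (y₀ - c)) ≤
        g (y₀ + t • (y - y₀)) + α / 2 * ((y₀ + t • (y - y₀) - c) ⬝ᵥ (y₀ + t • (y - y₀) - c)) :=
      hmin (mem_univ _)
    have hexp : (y₀ + t • (y - y₀) - c) ⬝ᵥ (y₀ + t • (y - y₀) - c) =
        (y₀ - c) ⬝ᵥ (y₀ - c) - 2 * t * ((c - y₀) ⬝ᵥ (y - y₀)) +
          t ^ 2 * ((y - y₀) ⬝ᵥ (y - y₀)) := by
      rw [show y₀ + t • (y - y₀) - c = t • (y - y₀) - (c - y₀) by module,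
        show y₀ - c = -(c - y₀) by abel]
      generalize y - y₀ = d
      generalize c - y₀ = e
      simp only [dotProduct_sub, sub_dotProduct, dotProduct_smul, smul_dotProduct, smul_eq_mul,
        dotProduct_comm d e, dotProduct_neg, neg_dotProduct, neg_neg]
      ring
    rw [hexp] at hle
    rw [smul_dotProduct, smul_eq_mul]
    refine le_of_mul_le_mul_left ?_ ht₀
    nlinarith
  have hlim : Tendsto (fun t => g y - g y₀ + α / 2 * ((y - y₀) ⬝ᵥ (y - y₀)) * t) (𝓝[>] 0)
      (𝓝 (g y - g y₀)) :=
    tendsto_nhdsWithin_of_tendsto_nhds (Continuous.tendsto' (by fun_prop) 0 _ (by simp))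
  have := ge_of_tendsto hlim (eventually_of_mem (Ioc_mem_nhdsGT one_pos) hslope)
  linarith

end Subgradient

theorem ProxRel.hasSubgradientAt {m : ℕ} {g : (Fin m → ℝ) → ℝ} (hg : ConvexOn ℝ univ g) {α : ℝ}
    (hα : α ≠ 0) {z u' : Fin m → ℝ} (h : ProxRel g α z u') :
    HasSubgradientAt g (α⁻¹ • (z - u')) u' := by
  have := hasSubgradientAt_of_isMinOn_add_sq hg h
  rwa [← smul_sub, smul_smul, mul_inv_cancel₀ hα, one_smul, sub_sub_cancel] at this

section NCS

variable {m n : ℕ} {A : Matrix (Fin m) (Fin n) ℝ} {b : Fin m → ℝ} {α : ℝ}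
  {g : (Fin m → ℝ) → ℝ} {M : Matrix (Fin n) (Fin n) ℝ}

theorem Dsq_eq_dotProduct (x : Fin n → ℝ) (u : Fin m → ℝ) :
    Dsq A α M x u = u ⬝ᵥ u - 2 * α * (u ⬝ᵥ (A *ᵥ x)) + α * (x ⬝ᵥ (M *ᵥ x)) := by
  have hA : x ⬝ᵥ ((Aᵀ * A) *ᵥ x) = (A *ᵥ x) ⬝ᵥ (A *ᵥ x) := by
    rw [← mulVec_mulVec, dotProduct_mulVec, vecMul_transpose]
  simp only [Dsq, dotProduct_sub, sub_dotProduct, dotProduct_smul, smul_dotProduct,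
    smul_eq_mul, sub_mulVec, smul_mulVec, dotProduct_comm (A *ᵥ x) u, hA]
  ring

theorem Dsq_sub_comm (x y : Fin n → ℝ) (u v : Fin m → ℝ) :
    Dsq A α M (x - y) (u - v) = Dsq A α M (y - x) (v - u) := by
  rw [← neg_sub y x, ← neg_sub v u]
  simp only [Dsq_eq_dotProduct, mulVec_neg, dotProduct_neg, neg_dotProduct, neg_neg]

theorem Dsq_nonneg (hα : 0 < α) (hMpsd : (M - α • (Aᵀ * A)).PosSemidef)
    (x : Fin n → ℝ) (u : Fin m → ℝ) : 0 ≤ Dsq A α M x u := by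
  have hM : x ⬝ᵥ ((α • M - α ^ 2 • (Aᵀ * A)) *ᵥ x) =
      α * (star x ⬝ᵥ ((M - α • (Aᵀ * A)) *ᵥ x)) := by
    rw [sq, ← smul_smul, ← smul_sub, smul_mulVec, dotProduct_smul, smul_eq_mul, star_trivial]
  rw [Dsq, hM]
  exact add_nonneg (dotProduct_self_star_nonneg _)
    (mul_nonneg hα.le (hMpsd.dotProduct_mulVec_nonneg x))

theorem Dsq_add_Dsq_sub_le (hM : Mᵀ = M) {p p' : Fin n → ℝ} {q q' : Fin m → ℝ}
    (hstep : M *ᵥ (p - p') = Aᵀ *ᵥ q)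
    (hmono : 0 ≤ q' ⬝ᵥ (q - q' + α • (A *ᵥ ((2 : ℝ) • p' - p)))) :
    Dsq A α M p' q' + Dsq A α M (p - p') (q - q') ≤ Dsq A α M p q := by
  have hq : q ⬝ᵥ (A *ᵥ p') = p' ⬝ᵥ (M *ᵥ p) - p' ⬝ᵥ (M *ᵥ p') := by
    rw [← dotProduct_sub, ← mulVec_sub, hstep, dotProduct_mulVec, ← mulVec_transpose,
      dotProduct_comm]
  have hMp : p ⬝ᵥ (M *ᵥ p') = p' ⬝ᵥ (M *ᵥ p) := by
    rw [dotProduct_mulVec, ← mulVec_transpose, hM, dotProduct_comm]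
  have hsplit : Dsq A α M p q = Dsq A α M p' q' + Dsq A α M (p - p') (q - q') +
      2 * (q' ⬝ᵥ (q - q' + α • (A *ᵥ ((2 : ℝ) • p' - p)))) := by
    simp only [Dsq_eq_dotProduct, dotProduct_sub, sub_dotProduct, dotProduct_add, dotProduct_smul,
      smul_eq_mul, mulVec_sub, mulVec_smul]
    linear_combination dotProduct_comm q q' + α * hMp - 2 * α * hq
  linarith

variable (A b α g M) in
/-- First-order form of an NCS step: `A (2x' - x) - b + α⁻¹ (u - u')` is the minimizer inside
`prox_{αg*}`. -/
structure IsNCSStep (x : Fin n → ℝ) (u : Fin m → ℝ) (x' : Fin n → ℝ) (u' : Fin m → ℝ) :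
    Prop where
  mulVec_sub_eq : M *ᵥ (x - x') = Aᵀ *ᵥ u
  hasSubgradientAt : HasSubgradientAt g (A *ᵥ ((2 : ℝ) • x' - x) - b + α⁻¹ • (u - u')) u'

theorem IsNCSStep.of_ncs (hα : 0 < α) (hg : ConvexOn ℝ univ g) (hM : Mᵀ = M)
    (hMpsd : (M - α • (Aᵀ * A)).PosSemidef) {x x' : Fin n → ℝ} {u u' : Fin m → ℝ}
    (hx : x' = x - mpInv M *ᵥ (Aᵀ *ᵥ u))
    (hu : ProxRel g α (u + α • (A *ᵥ ((2 : ℝ) • x' - x) - b)) u') :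
    IsNCSStep A b α g M x u x' u' where
  mulVec_sub_eq := by
    rw [hx, sub_sub_cancel]
    exact mulVec_mpInv_mulVec_transpose A hM (fun _ => mulVec_eq_zero_of_posSemidef_sub hα hMpsd) u
  hasSubgradientAt := by
    have h := hu.hasSubgradientAt hg hα.ne'
    rwa [add_sub_right_comm, smul_add, smul_smul, inv_mul_cancel₀ hα.ne', one_smul, add_comm] at h

theorem isNCSStep_self {xs : Fin n → ℝ} {us : Fin m → ℝ} (hus : Aᵀ *ᵥ us = 0)
    (hsub : HasSubgradientAt g (A *ᵥ xs - b) us) : IsNCSStep A b α g M xs us xs us where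
  mulVec_sub_eq := by rw [sub_self, mulVec_zero, hus]
  hasSubgradientAt := by
    rwa [show (2 : ℝ) • xs - xs = xs by module, sub_self, smul_zero, add_zero]

theorem IsNCSStep.Dsq_add_Dsq_sub_le (hα : 0 < α) (hM : Mᵀ = M)
    {x x' y y' : Fin n → ℝ} {u u' v v' : Fin m → ℝ}
    (h₁ : IsNCSStep A b α g M x u x' u') (h₂ : IsNCSStep A b α g M y v y' v') :
    Dsq A α M (x' - y') (u' - v') + Dsq A α M (x - y - (x' - y')) (u - v - (u' - v')) ≤
      Dsq A α M (x - y) (u - v) := by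
  apply _root_.Dsq_add_Dsq_sub_le hM
  · rw [show x - y - (x' - y') = (x - x') - (y - y') by abel, mulVec_sub, h₁.mulVec_sub_eq,
      h₂.mulVec_sub_eq, mulVec_sub]
  · have hmono := h₁.hasSubgradientAt.dotProduct_sub_nonneg h₂.hasSubgradientAt
    have hdiff : u - v - (u' - v') + α • (A *ᵥ ((2 : ℝ) • (x' - y') - (x - y))) =
        α • (A *ᵥ ((2 : ℝ) • x' - x) - b + α⁻¹ • (u - u') -
          (A *ᵥ ((2 : ℝ) • y' - y) - b + α⁻¹ • (v - v'))) := by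
      simp only [smul_sub, smul_add, smul_smul, mul_inv_cancel₀ hα.ne', one_smul, mulVec_sub,
        mulVec_smul]
      abel
    rw [hdiff, dotProduct_smul, smul_eq_mul]
    exact mul_nonneg hα.le hmono

end NCS

theorem le_one_div_succ_mul_of_add_le {a d : ℕ → ℝ} (ha : Antitone a) (hd : ∀ k, 0 ≤ d k)
    (hdesc : ∀ k, d (k + 1) + a k ≤ d k) (k : ℕ) : a k ≤ 1 / (k + 1 : ℝ) * d 0 := by
  have hsum : ∀ k : ℕ, (k + 1 : ℝ) * a k + d (k + 1) ≤ d 0 := by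
    intro k
    induction k with
    | zero => simpa [add_comm] using hdesc 0
    | succ k ih =>
      have hmul : (k + 1 : ℝ) * a (k + 1) ≤ (k + 1 : ℝ) * a k :=
        mul_le_mul_of_nonneg_left (ha k.le_succ) (by positivity)
      push_cast
      linarith [hdesc (k + 1)]
  rw [one_div_mul_eq_div, le_div_iff₀ (by positivity), mul_comm]
  linarith [hsum k, hd (k + 1)]

theorem ncs_summable_rate_general
    {m n : ℕ}
    (A : Matrix (Fin m) (Fin n) ℝ) (b : Fin m → ℝ)
    (α : ℝ) (hα : 0 < α)
    (g : (Fin m → ℝ) → ℝ) (hg : ConvexOn ℝ Set.univ g)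
    (M : Matrix (Fin n) (Fin n) ℝ) (hMsymm : Mᵀ = M)
    (hMpsd : (M - α • (Aᵀ * A)).PosSemidef)
    -- NCS iterates:
    (x : ℕ → Fin n → ℝ) (u : ℕ → Fin m → ℝ)
    (hx : ∀ k, x (k + 1) = x k - mpInv M *ᵥ (Aᵀ *ᵥ u k))
    (hu : ∀ k, ProxRel g α
      (u k + α • (A *ᵥ ((2 : ℝ) • x (k + 1) - x k) - b)) (u (k + 1)))
    -- a primal solution x⋆ with dual certificate u⋆:
    (xs : Fin n → ℝ) (us : Fin m → ℝ)
    (hus : Aᵀ *ᵥ us = 0)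
    (hsub : ∀ y, g (A *ᵥ xs - b) + us ⬝ᵥ (y - (A *ᵥ xs - b)) ≤ g y) :
    ∀ k : ℕ,
      Dsq A α M (x (k + 1) - x k) (u (k + 1) - u k) ≤
        (1 / (k + 1 : ℝ)) * Dsq A α M (x 0 - xs) (u 0 - us) := by
  have step (k : ℕ) : IsNCSStep A b α g M (x k) (u k) (x (k + 1)) (u (k + 1)) :=
    .of_ncs hα hg hMsymm hMpsd (hx k) (hu k)
  have fixed : IsNCSStep A b α g M xs us xs us := isNCSStep_self hus hsub
  refine le_one_div_succ_mul_of_add_le (antitone_nat_of_succ_le fun k => ?_)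
    (fun k => Dsq_nonneg hα hMpsd (x k - xs) (u k - us)) (fun k => ?_)
  · have h := (step (k + 1)).Dsq_add_Dsq_sub_le hα hMsymm (step k)
    linarith [Dsq_nonneg hα hMpsd (x (k + 1) - x k - (x (k + 2) - x (k + 1)))
      (u (k + 1) - u k - (u (k + 2) - u (k + 1)))]
  · have h := (step k).Dsq_add_Dsq_sub_le hα hMsymm fixed
    rwa [sub_sub_sub_cancel_right, sub_sub_sub_cancel_right, Dsq_sub_comm (x k)] at h

theorem ncs_summable_rate
    {m n : ℕ}
    (A : Matrix (Fin m) (Fin n) ℝ) (b : Fin m → ℝ)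
    (α : ℝ) (hα : 0 < α)
    (g : (Fin m → ℝ) → ℝ) (hg : ConvexOn ℝ Set.univ g)
    (M : Matrix (Fin n) (Fin n) ℝ) (hMsymm : Mᵀ = M)
    (hMpsd : (M - α • (Aᵀ * A)).PosSemidef)
    -- NCS iterates:
    (x : ℕ → Fin n → ℝ) (u : ℕ → Fin m → ℝ)
    (hx : ∀ k, x (k + 1) = x k - mpInv M *ᵥ (Aᵀ *ᵥ u k))
    (hu : ∀ k, ProxRel g α
      (u k + α • (A *ᵥ ((2 : ℝ) • x (k + 1) - x k) - b)) (u (k + 1)))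
    -- a primal solution x⋆ with dual certificate u⋆:
    (xs : Fin n → ℝ) (us : Fin m → ℝ)
    (hxs : ∀ y, g (A *ᵥ xs - b) ≤ g (A *ᵥ y - b))
    (hus : Aᵀ *ᵥ us = 0)
    (hsub : ∀ y, g (A *ᵥ xs - b) + us ⬝ᵥ (y - (A *ᵥ xs - b)) ≤ g y) :
    ∀ k : ℕ,
      Dsq A α M (x (k + 1) - x k) (u (k + 1) - u k) ≤
        (1 / (k + 1 : ℝ)) * Dsq A α M (x 0 - xs) (u 0 - us) :=
  ncs_summable_rate_general A b α hα g hg M hMsymm hMpsd x u hx hu xs us hus hsub
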